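/- Let X₁, …, X_d be nonnegative random variables with common distribution G ∈ 𝒮* that are LWQD: there exist constants gₙ > 0 and x₀ > 0 such that P[Σ_{j<n} X_j > x | Xₙ > y] ≤ g_{n−1} P[Σ_{j<n} X_j > x] uniformly for n = 2,…,d and x,y ≥ x₀. Then for A₁' = {x : Σᵢ (1/d)xᵢ > c} (c > 0) the distribution F of (X₁,…,X_d) satisfies F ∈ 𝒮*_{A₁'}: indeed P[(c/d)Σ_j X_j > x] ∼ d·Ḡ'(x) where G' is the distribution of (c/d)X₁, and G' ∈ 𝒮* implies F_{A₁'} ∈ 𝒮*. -/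

import Mathlib

open MeasureTheory ProbabilityTheory Filter Set Pointwise Asymptotics

/-- A set `A ⊆ ℝ^d` is increasing if `x ∈ A` and `y ≥ 0` componentwise imply `x + y ∈ A`. -/
def IncreasingSet {d : ℕ} (A : Set (Fin d → ℝ)) : Prop :=
  ∀ x ∈ A, ∀ y : Fin d → ℝ, (∀ i, 0 ≤ y i) → x + y ∈ A

/-- The family 𝓡 of open increasing sets with convex complement and `0 ∉ closure A`. -/
def MemR {d : ℕ} (A : Set (Fin d → ℝ)) : Prop :=
  IsOpen A ∧ IncreasingSet A ∧ Convex ℝ Aᶜ ∧ (0 : Fin d → ℝ) ∉ closure A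

/-- `P[X ∈ x·A]`. -/
noncomputable def probIn {d : ℕ} {Ω : Type*} [MeasurableSpace Ω] (P : Measure Ω)
    (X : Ω → (Fin d → ℝ)) (A : Set (Fin d → ℝ)) (x : ℝ) : ℝ :=
  (P {ω | X ω ∈ x • A}).toReal

/-- `Y_A = sup{u > 0 : X ∈ u·A}`. -/
noncomputable def YA {d : ℕ} {Ω : Type*} (X : Ω → (Fin d → ℝ)) (A : Set (Fin d → ℝ))
    (ω : Ω) : ℝ :=
  sSup {u : ℝ | 0 < u ∧ X ω ∈ u • A}

/-- The tail of the distribution `F_A` of `Y_A`. -/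
noncomputable def tailYA {d : ℕ} {Ω : Type*} [MeasurableSpace Ω] (P : Measure Ω)
    (X : Ω → (Fin d → ℝ)) (A : Set (Fin d → ℝ)) (x : ℝ) : ℝ :=
  (P {ω | x < YA X A ω}).toReal

/-- A (positive) tail function is long-tailed: `T(x−a)/T(x) → 1` for every `a > 0`. -/
def LongTailedFun (T : ℝ → ℝ) : Prop :=
  (∀ x, 0 < T x) ∧ ∀ a > 0, Tendsto (fun x => T (x - a) / T x) atTop (nhds 1)

/-- The mean `μ_V = ∫₀^∞ V̄(y) dy` computed from the tail function. -/
noncomputable def tailMean (T : ℝ → ℝ) : ℝ := ∫ y in Ioi (0 : ℝ), T y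

/-- Strong subexponentiality (class 𝒮*) of a tail function:
`∫₀^x T(x−y)T(y) dy ∼ 2 μ T(x)`, with `μ = ∫₀^∞ T < ∞` and `T > 0`. -/
def StrongSubexpFun (T : ℝ → ℝ) : Prop :=
  (∀ x, 0 < T x) ∧ IntegrableOn T (Ioi 0) volume ∧
    Tendsto (fun x => (∫ y in (0 : ℝ)..x, T (x - y) * T y) / T x) atTop
      (nhds (2 * tailMean T))

/-- `V̄_u(x) = min(1, ∫_x^{x+u} V̄(y) dy)`. -/
noncomputable def tailU (T : ℝ → ℝ) (u x : ℝ) : ℝ := min 1 (∫ y in x..(x + u), T y)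

/-- Strongly subexponential (class 𝒮_*): `V̄_u^{2*}(x)/V̄_u(x) → 2` uniformly in `u ∈ [1,∞)`,
where `V̄_u^{2*}` is the tail of the sum of two independent random variables with tail `V̄_u`. -/
def StronglySubexpFun (T : ℝ → ℝ) : Prop :=
  (∀ x, 0 < T x) ∧ IntegrableOn T (Ioi 0) volume ∧
    ∀ ε > (0 : ℝ), ∃ x₀ : ℝ, ∀ u ≥ (1 : ℝ), ∀ x ≥ x₀,
      ∀ (Ω' : Type) (_ : MeasurableSpace Ω') (Q : Measure Ω'), IsProbabilityMeasure Q →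
        ∀ Z₁ Z₂ : Ω' → ℝ, Measurable Z₁ → Measurable Z₂ → IndepFun Z₁ Z₂ Q →
          (∀ z, (Q {ω | z < Z₁ ω}).toReal = tailU T u z) →
          (∀ z, (Q {ω | z < Z₂ ω}).toReal = tailU T u z) →
          |(Q {ω | x < Z₁ ω + Z₂ ω}).toReal / tailU T u x - 2| < ε

/-- Insensitivity function of a tail function. -/
def Insensitivity (T : ℝ → ℝ) (h : ℝ → ℝ) : Prop :=
  (∀ x, 0 < h x) ∧ Tendsto h atTop atTop ∧ Tendsto (fun x => h x / x) atTop (nhds 0) ∧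
    Tendsto (fun x => T (x - h x) / T x) atTop (nhds 1) ∧
    Tendsto (fun x => T (x + h x) / T x) atTop (nhds 1)

/-- Generalized inverse of `h`. -/
noncomputable def geninv (h : ℝ → ℝ) (y : ℝ) : ℝ := sInf {x | 0 ≤ x ∧ y ≤ h x}

open scoped Topology

/-!
Write `T` for the common tail `Ḡ` and `μ = ∫₀^∞ T`. Splitting `∫₀^x T(x-y)T(y)dy` at `s` and
`x - s`, the 𝒮* property says that the middle piece over `[s, x - s]` is
`(2μ - 2∫₀^s T + o(1)) T(x)`, which is small once `s` is large; comparing the half-convolution with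
`T(x) ∫₀^{x/2} T` shows moreover that `T` is long-tailed.

`P[X₁ + ⋯ + Xₙ > x] ∼ n T(x)` follows by induction on `n`, adding `Y = Xₙ` to
`S = X₁ + ⋯ + Xₙ₋₁`. Inclusion–exclusion and LWQD give
`P[S + Y > x] ≥ P[S > x] + P[Y > x] - g P[S > x] P[Y > x]`. For the upper bound, outside
`{S > x - t} ∪ {Y > x - t}` the event `{S + Y > x}` is covered by the grid events
`{S > t + k - 1, Y > x - t - k - 1}`, `0 ≤ k ≤ x - 2t`. By LWQD and `P[S > ·] ≤ C T` each has
probability at most `g C T(t + k - 1) T(x - t - k - 1)`, and their sum is dominated by the middle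
convolution piece at `x - 3` with cut `t - 2`, which is negligible as `t → ∞`.

Finally 𝒮* is stable under `T ↦ κ T(α ·)` and under tail equivalence, and the tail of
`(c/d) ∑ Xⱼ` is equivalent to `d T(d x / c)`.
-/

theorem tendsto_of_eventually_squeeze {α ι β : Type*} [LinearOrder β] [TopologicalSpace β]
    [OrderTopology β] {F : Filter α} {p : Filter ι} [p.NeBot] {f : α → β} {l u : ι → α → β}
    {a b : ι → β} {L : β} (hl : ∀ᶠ i in p, Tendsto (l i) F (𝓝 (a i)))
    (hu : ∀ᶠ i in p, Tendsto (u i) F (𝓝 (b i))) (ha : Tendsto a p (𝓝 L))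
    (hb : Tendsto b p (𝓝 L)) (hlf : ∀ᶠ i in p, ∀ᶠ x in F, l i x ≤ f x)
    (hfu : ∀ᶠ i in p, ∀ᶠ x in F, f x ≤ u i x) :
    Tendsto f F (𝓝 L) := by
  refine tendsto_order.2 ⟨fun c hc => ?_, fun c hc => ?_⟩
  · obtain ⟨i, hai, hli, hi⟩ := ((ha.eventually (lt_mem_nhds hc)).and (hl.and hlf)).exists
    filter_upwards [hli.eventually (lt_mem_nhds hai), hi] with x h1 h2 using h1.trans_le h2
  · obtain ⟨i, hbi, hui, hi⟩ := ((hb.eventually (gt_mem_nhds hc)).and (hu.and hfu)).exists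
    filter_upwards [hui.eventually (gt_mem_nhds hbi), hi] with x h1 h2 using h2.trans_lt h1

theorem tendsto_sub_const_atTop (a : ℝ) : Tendsto (fun x : ℝ => x - a) atTop atTop := by
  simpa only [sub_eq_add_neg, id] using tendsto_atTop_add_const_right atTop (-a) tendsto_id

section TailFunction

variable {T T₁ T₂ : ℝ → ℝ}

theorem intervalIntegrable_conv (hA : Antitone T) (hT : ∀ x, 0 ≤ T x) (x a b : ℝ) :
    IntervalIntegrable (fun y => T (x - y) * T y) volume a b := by
  rw [intervalIntegrable_iff]
  refine Integrable.mono' (g := fun _ => T (x - max a b) * T (min a b))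
    (integrableOn_const measure_Ioc_lt_top.ne) ?_ ?_
  · exact ((hA.measurable.comp (measurable_const.sub measurable_id)).mul
      hA.measurable).aestronglyMeasurable
  · filter_upwards [ae_restrict_mem measurableSet_uIoc] with y ⟨h1, h2⟩
    rw [Real.norm_eq_abs, abs_of_nonneg (mul_nonneg (hT _) (hT _))]
    exact mul_le_mul (hA (by linarith)) (hA h1.le) (hT _) (hT _)

theorem integral_conv_symm (x s : ℝ) :
    ∫ y in (x - s)..x, T (x - y) * T y = ∫ y in (0 : ℝ)..s, T (x - y) * T y := by
  simpa [mul_comm] using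
    (intervalIntegral.integral_comp_sub_left (fun y => T (x - y) * T y) x (a := 0) (b := s)).symm

theorem integral_conv_split (hA : Antitone T) (hT : ∀ x, 0 ≤ T x) (x s : ℝ) :
    ∫ y in (0 : ℝ)..x, T (x - y) * T y =
      2 * (∫ y in (0 : ℝ)..s, T (x - y) * T y) + ∫ y in s..(x - s), T (x - y) * T y := by
  have hi := intervalIntegrable_conv hA hT x
  have h₁ := intervalIntegral.integral_add_adjacent_intervals (hi 0 (x - s)) (hi (x - s) x)
  have h₂ := intervalIntegral.integral_add_adjacent_intervals (hi 0 s) (hi s (x - s))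
  rw [integral_conv_symm] at h₁
  rw [← h₁, ← h₂]
  ring

theorem tendsto_integral_tailMean (hint : IntegrableOn T (Ioi 0)) :
    Tendsto (fun s => ∫ y in (0 : ℝ)..s, T y) atTop (𝓝 (tailMean T)) :=
  intervalIntegral_tendsto_integral_Ioi 0 hint tendsto_id

theorem StrongSubexpFun.tendsto_integral_conv_half_div (hA : Antitone T)
    (hT : StrongSubexpFun T) :
    Tendsto (fun x => (∫ y in (0 : ℝ)..(x / 2), T (x - y) * T y) / T x) atTop
      (𝓝 (tailMean T)) := by
  obtain ⟨hpos, -, hS⟩ := hT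
  have h := hS.div_const 2
  rw [mul_div_cancel_left₀ _ two_ne_zero] at h
  refine h.congr fun x => ?_
  rw [integral_conv_split hA (fun y => (hpos y).le) x (x / 2), sub_half,
    intervalIntegral.integral_same]
  ring

theorem mul_sub_le_integral_conv_half (hA : Antitone T) (hT : ∀ x, 0 ≤ T x) {a x : ℝ}
    (ha : 0 ≤ a) (hx : 4 * a ≤ x) :
    a * T (2 * a) * (T (x - a) - T x) ≤
      (∫ y in (0 : ℝ)..(x / 2), T (x - y) * T y) - T x * ∫ y in (0 : ℝ)..(x / 2), T y := by
  have hiT : ∀ u v, IntervalIntegrable T volume u v := fun u v => hA.intervalIntegrable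
  have hfi : ∀ u v, IntervalIntegrable (fun y => (T (x - y) - T x) * T y) volume u v :=
    fun u v => by
      simpa [sub_mul] using (intervalIntegrable_conv hA hT x u v).sub ((hiT u v).const_mul (T x))
  rw [← intervalIntegral.integral_const_mul, ← intervalIntegral.integral_sub
    (intervalIntegrable_conv hA hT x _ _) ((hiT _ _).const_mul _)]
  simp only [← sub_mul]
  calc a * T (2 * a) * (T (x - a) - T x)
      = ∫ _ in a..(2 * a), (T (x - a) - T x) * T (2 * a) := by simp; ring
    _ ≤ ∫ y in a..(2 * a), (T (x - y) - T x) * T y :=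
        intervalIntegral.integral_mono_on (by linarith) intervalIntegrable_const (hfi _ _)
          fun y hy => mul_le_mul (by linarith [hA (show x - y ≤ x - a by linarith [hy.1])])
            (hA hy.2) (hT _) (sub_nonneg.2 (hA (by linarith [hy.1])))
    _ ≤ ∫ y in (0 : ℝ)..(x / 2), (T (x - y) - T x) * T y := by
        refine intervalIntegral.integral_mono_interval ha (by linarith) (by linarith) ?_ (hfi _ _)
        filter_upwards [ae_restrict_mem measurableSet_Ioc] with y hy
        exact mul_nonneg (sub_nonneg.2 (hA (by linarith [hy.1]))) (hT y)

theorem StrongSubexpFun.longTailedFun (hA : Antitone T) (hT : StrongSubexpFun T) :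
    LongTailedFun T := by
  have hpos := hT.1
  refine ⟨hpos, fun a ha => ?_⟩
  have hD : Tendsto (fun x => (∫ y in (0 : ℝ)..(x / 2), T (x - y) * T y) / T x -
      ∫ y in (0 : ℝ)..(x / 2), T y) atTop (𝓝 0) := by
    simpa using (hT.tendsto_integral_conv_half_div hA).sub
      ((tendsto_integral_tailMean hT.2.1).comp (tendsto_id.atTop_div_const two_pos))
  have hc : 0 < a * T (2 * a) := mul_pos ha (hpos _)
  refine tendsto_of_tendsto_of_tendsto_of_le_of_le' tendsto_const_nhds
    (by simpa using (hD.div_const (a * T (2 * a))).const_add 1)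
    (Eventually.of_forall fun x => (one_le_div (hpos x)).2 (hA (by linarith))) ?_
  filter_upwards [eventually_ge_atTop (4 * a)] with x hx
  have key := mul_sub_le_integral_conv_half hA (fun y => (hpos y).le) ha.le hx
  have e : (∫ y in (0 : ℝ)..(x / 2), T (x - y) * T y) / T x - ∫ y in (0 : ℝ)..(x / 2), T y =
      ((∫ y in (0 : ℝ)..(x / 2), T (x - y) * T y) - T x * ∫ y in (0 : ℝ)..(x / 2), T y) / T x := by
    rw [sub_div, mul_div_cancel_left₀ _ (hpos x).ne']
  rw [e, div_div, ← sub_le_iff_le_add', div_sub_one (hpos x).ne',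
    div_le_div_iff₀ (hpos x) (mul_pos (hpos x) hc)]
  nlinarith [hpos x]

theorem LongTailedFun.tendsto_integral_conv_div (hA : Antitone T) (hT : LongTailedFun T) {s : ℝ}
    (hs : 0 < s) :
    Tendsto (fun x => (∫ y in (0 : ℝ)..s, T (x - y) * T y) / T x) atTop
      (𝓝 (∫ y in (0 : ℝ)..s, T y)) := by
  obtain ⟨hpos, hlt⟩ := hT
  have hiT : IntervalIntegrable T volume 0 s := hA.intervalIntegrable
  have hi := intervalIntegrable_conv hA (fun y => (hpos y).le)
  refine tendsto_of_tendsto_of_tendsto_of_le_of_le tendsto_const_nhds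
    (by simpa using (hlt s hs).mul_const (∫ y in (0 : ℝ)..s, T y)) (fun x => ?_) (fun x => ?_)
  · rw [le_div_iff₀ (hpos x), mul_comm, ← intervalIntegral.integral_const_mul]
    exact intervalIntegral.integral_mono_on hs.le (hiT.const_mul _) (hi x 0 s) fun y hy =>
      mul_le_mul_of_nonneg_right (hA (by linarith [hy.1])) (hpos y).le
  · rw [div_mul_eq_mul_div, div_le_div_iff_of_pos_right (hpos x),
      ← intervalIntegral.integral_const_mul]
    exact intervalIntegral.integral_mono_on hs.le (hi x 0 s) (hiT.const_mul _) fun y hy =>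
      mul_le_mul_of_nonneg_right (hA (by linarith [hy.2])) (hpos y).le

theorem StrongSubexpFun.tendsto_integral_conv_mid_div (hA : Antitone T)
    (hT : StrongSubexpFun T) {s : ℝ} (hs : 0 < s) :
    Tendsto (fun x => (∫ y in s..(x - s), T (x - y) * T y) / T x) atTop
      (𝓝 (2 * tailMean T - 2 * ∫ y in (0 : ℝ)..s, T y)) := by
  refine (hT.2.2.sub (((hT.longTailedFun hA).tendsto_integral_conv_div hA hs).const_mul 2)).congr
    fun x => ?_
  rw [integral_conv_split hA (fun y => (hT.1 y).le) x s]
  ring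

theorem LongTailedFun.tendsto_comp_sub_div (hT : LongTailedFun T) {f : ℝ → ℝ} {c a : ℝ}
    (ha : 0 < a) (h : Tendsto (fun x => f x / T x) atTop (𝓝 c)) :
    Tendsto (fun x => f (x - a) / T x) atTop (𝓝 c) := by
  simpa using ((h.comp (tendsto_sub_const_atTop a)).mul (hT.2 a ha)).congr fun x => by
    simp [div_mul_div_cancel₀ (hT.1 (x - a)).ne']

theorem LongTailedFun.of_tendsto_div (h₁ : LongTailedFun T₁) (hpos : ∀ x, 0 < T₂ x)
    (h : Tendsto (fun x => T₂ x / T₁ x) atTop (𝓝 1)) : LongTailedFun T₂ := by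
  refine ⟨hpos, fun a ha => ?_⟩
  simpa using ((h₁.tendsto_comp_sub_div ha h).div h one_ne_zero).congr fun x => by
    simp [div_div_div_cancel_right₀ (h₁.1 x).ne']

theorem integrableOn_Ioi_of_le_const_mul (hA : Antitone T₂) (hT₂ : ∀ x, 0 ≤ T₂ x)
    (h₁ : IntegrableOn T₁ (Ioi 0)) {M K : ℝ} (hM : 0 ≤ M) (hle : ∀ y ≥ M, T₂ y ≤ K * T₁ y) :
    IntegrableOn T₂ (Ioi 0) := by
  rw [← Ioc_union_Ioi_eq_Ioi hM]
  refine ((hA.antitoneOn _).integrableOn_isCompact isCompact_Icc |>.mono_set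
    Ioc_subset_Icc_self).union (Integrable.mono' ((h₁.mono_set (Ioi_subset_Ioi hM)).const_mul K)
      hA.measurable.aestronglyMeasurable ?_)
  filter_upwards [ae_restrict_mem measurableSet_Ioi] with y hy
  rw [Real.norm_eq_abs, abs_of_nonneg (hT₂ y)]
  exact hle y (le_of_lt hy)

theorem integral_conv_le_of_le (hA₁ : Antitone T₁) (hT₁ : ∀ x, 0 ≤ T₁ x) (hA₂ : Antitone T₂)
    (hT₂ : ∀ x, 0 ≤ T₂ x) {K M x : ℝ} (hle : ∀ y ≥ M, T₂ y ≤ K * T₁ y) (hx : 2 * M ≤ x) :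
    ∫ y in M..(x - M), T₂ (x - y) * T₂ y ≤ K ^ 2 * ∫ y in M..(x - M), T₁ (x - y) * T₁ y := by
  rw [← intervalIntegral.integral_const_mul]
  refine intervalIntegral.integral_mono_on (by linarith) (intervalIntegrable_conv hA₂ hT₂ x _ _)
    ((intervalIntegrable_conv hA₁ hT₁ x _ _).const_mul _) fun y hy => ?_
  have h₁ := hle (x - y) (by linarith [hy.2])
  calc T₂ (x - y) * T₂ y ≤ K * T₁ (x - y) * (K * T₁ y) :=
        mul_le_mul h₁ (hle y hy.1) (hT₂ _) ((hT₂ _).trans h₁)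
    _ = K ^ 2 * (T₁ (x - y) * T₁ y) := by ring

theorem StrongSubexpFun.of_tendsto_div (hA₁ : Antitone T₁) (h₁ : StrongSubexpFun T₁)
    (hA₂ : Antitone T₂) (hpos₂ : ∀ x, 0 < T₂ x) (h : Tendsto (fun x => T₂ x / T₁ x) atTop (𝓝 1)) :
    StrongSubexpFun T₂ := by
  have hpos₁ := h₁.1
  obtain ⟨M₀, hM₀⟩ : ∃ M₀, ∀ y ≥ M₀, T₂ y ≤ 2 * T₁ y := by
    obtain ⟨M₀, h⟩ := eventually_atTop.1 (h.eventually_lt_const one_lt_two)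
    exact ⟨M₀, fun y hy => ((div_lt_iff₀ (hpos₁ y)).1 (h y hy)).le⟩
  have hint₂ : IntegrableOn T₂ (Ioi 0) := integrableOn_Ioi_of_le_const_mul hA₂
    (fun y => (hpos₂ y).le) h₁.2.1 (le_max_right M₀ 0) fun y hy => hM₀ y (le_of_max_le_left hy)
  have hlt₂ := (h₁.longTailedFun hA₁).of_tendsto_div hpos₂ h
  have hinv : Tendsto (fun x => T₁ x / T₂ x) atTop (𝓝 1) := by
    simpa using h.inv₀ one_ne_zero
  refine ⟨hpos₂, hint₂, tendsto_of_eventually_squeeze (p := atTop)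
    (l := fun M x => 2 * ((∫ y in (0 : ℝ)..M, T₂ (x - y) * T₂ y) / T₂ x))
    (u := fun M x => 2 * ((∫ y in (0 : ℝ)..M, T₂ (x - y) * T₂ y) / T₂ x) +
      4 * ((∫ y in M..(x - M), T₁ (x - y) * T₁ y) / T₁ x * (T₁ x / T₂ x)))
    (a := fun M => 2 * ∫ y in (0 : ℝ)..M, T₂ y)
    (b := fun M => 2 * (∫ y in (0 : ℝ)..M, T₂ y) +
      4 * (2 * tailMean T₁ - 2 * ∫ y in (0 : ℝ)..M, T₁ y))
    ?_ ?_ ((tendsto_integral_tailMean hint₂).const_mul 2) ?_ ?_ ?_⟩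
  · filter_upwards [eventually_gt_atTop 0] with M hM
    exact (hlt₂.tendsto_integral_conv_div hA₂ hM).const_mul 2
  · filter_upwards [eventually_gt_atTop 0] with M hM
    simpa using ((hlt₂.tendsto_integral_conv_div hA₂ hM).const_mul 2).add
      (((h₁.tendsto_integral_conv_mid_div hA₁ hM).mul hinv).const_mul 4)
  · simpa using ((tendsto_integral_tailMean hint₂).const_mul 2).add
      ((((tendsto_integral_tailMean h₁.2.1).const_mul 2).const_sub (2 * tailMean T₁)).const_mul 4)
  · filter_upwards [eventually_ge_atTop 0] with M hM
    filter_upwards [eventually_ge_atTop (2 * M)] with x hx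
    rw [integral_conv_split hA₂ (fun y => (hpos₂ y).le) x M, add_div, mul_div_assoc,
      le_add_iff_nonneg_right]
    exact div_nonneg (intervalIntegral.integral_nonneg (by linarith)
      fun y _ => (mul_pos (hpos₂ _) (hpos₂ _)).le) (hpos₂ x).le
  · filter_upwards [eventually_ge_atTop M₀] with M hM
    filter_upwards [eventually_ge_atTop (2 * M)] with x hx
    have hB := integral_conv_le_of_le hA₁ (fun y => (hpos₁ y).le) hA₂ (fun y => (hpos₂ y).le)
      (fun y hy => hM₀ y (hM.trans hy)) hx
    rw [integral_conv_split hA₂ (fun y => (hpos₂ y).le) x M, add_div, mul_div_assoc,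
      div_mul_div_cancel₀ (hpos₁ x).ne']
    gcongr
    rw [← mul_div_assoc]
    exact div_le_div_of_nonneg_right (by linarith) (hpos₂ x).le

theorem StrongSubexpFun.const_mul_comp_mul (hT : StrongSubexpFun T) {κ α : ℝ} (hκ : 0 < κ)
    (hα : 0 < α) : StrongSubexpFun (fun x => κ * T (α * x)) := by
  obtain ⟨hpos, hint, hS⟩ := hT
  have hmean : tailMean (fun x => κ * T (α * x)) = κ * α⁻¹ * tailMean T := by
    simp only [tailMean, integral_const_mul, integral_comp_mul_left_Ioi T 0 hα, mul_zero,
      smul_eq_mul]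
    ring
  have hconv : ∀ x, ∫ y in (0 : ℝ)..x, κ * T (α * (x - y)) * (κ * T (α * y)) =
      κ * κ * α⁻¹ * ∫ u in (0 : ℝ)..(α * x), T (α * x - u) * T u := by
    intro x
    simp only [mul_sub, mul_mul_mul_comm κ, intervalIntegral.integral_const_mul,
      intervalIntegral.integral_comp_mul_left (fun u => T (α * x - u) * T u) hα.ne', mul_zero,
      smul_eq_mul]
    ring
  refine ⟨fun x => mul_pos hκ (hpos _), ?_, ?_⟩
  · exact ((integrableOn_Ioi_comp_mul_left_iff T 0 hα).2 (by simpa using hint)).const_mul κ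
  · have h := (hS.comp (tendsto_id.const_mul_atTop hα)).const_mul (κ * α⁻¹)
    rw [show κ * α⁻¹ * (2 * tailMean T) = 2 * (κ * α⁻¹ * tailMean T) by ring, ← hmean] at h
    refine h.congr fun x => ?_
    simp only [Function.comp_apply, id, hconv]
    field_simp

theorem sum_mul_le_integral_conv (hA : Antitone T) (hT : ∀ x, 0 ≤ T x) {x t : ℝ}
    (hx : 2 * t ≤ x) :
    ∑ k ∈ Finset.range (⌊x - 2 * t⌋₊ + 1), T (t + k - 1) * T (x - t - k - 1) ≤
      ∫ y in (t - 2)..(x - 3 - (t - 2)), T (x - 3 - y) * T y := by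
  have hi := intervalIntegrable_conv hA hT (x - 3)
  set K := ⌊x - 2 * t⌋₊ + 1
  set a : ℕ → ℝ := fun k => t - 2 + k with ha
  have hK : a K ≤ x - 3 - (t - 2) := by
    have := Nat.floor_le (sub_nonneg.2 hx)
    simp only [ha, K]
    push_cast
    linarith
  calc ∑ k ∈ Finset.range K, T (t + k - 1) * T (x - t - k - 1)
      ≤ ∑ k ∈ Finset.range K, ∫ y in a k..a (k + 1), T (x - 3 - y) * T y := by
        refine Finset.sum_le_sum fun k _ => ?_
        have hlen : a (k + 1) - a k = 1 := by simp only [ha]; push_cast; ring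
        calc T (t + k - 1) * T (x - t - k - 1)
            = ∫ _ in a k..a (k + 1), T (x - t - k - 1) * T (t + k - 1) := by
              simp [hlen, mul_comm]
          _ ≤ ∫ y in a k..a (k + 1), T (x - 3 - y) * T y := by
              refine intervalIntegral.integral_mono_on (by linarith) intervalIntegrable_const
                (hi _ _) fun y hy => ?_
              simp only [ha] at hy
              push_cast at hy
              exact mul_le_mul (hA (by linarith [hy.1])) (hA (by linarith [hy.2])) (hT _) (hT _)
    _ = ∫ y in a 0..a K, T (x - 3 - y) * T y :=
        intervalIntegral.sum_integral_adjacent_intervals fun k _ => hi _ _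
    _ ≤ ∫ y in (t - 2)..(x - 3 - (t - 2)), T (x - 3 - y) * T y := by
        refine intervalIntegral.integral_mono_interval (by simp [ha]) (by simp [ha]) hK ?_ (hi _ _)
        exact Eventually.of_forall fun y => mul_nonneg (hT _) (hT _)

theorem exists_le_mul_of_tendsto_div {f : ℝ → ℝ} {B L : ℝ} (hf : ∀ y, f y ≤ B)
    (hA : Antitone T) (hpos : ∀ y, 0 < T y) (h : Tendsto (fun y => f y / T y) atTop (𝓝 L)) :
    ∃ C, 0 ≤ C ∧ ∀ y, f y ≤ C * T y := by
  obtain ⟨y₁, hy₁⟩ := eventually_atTop.1 (h.eventually_lt_const (lt_add_one L))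
  set c : ℝ := max (B / T y₁) 0
  refine ⟨max (L + 1) c, le_max_of_le_right (le_max_right _ _), fun y => ?_⟩
  rcases le_or_gt y₁ y with hy | hy
  · calc f y ≤ (L + 1) * T y := ((div_lt_iff₀ (hpos y)).1 (hy₁ y hy)).le
      _ ≤ max (L + 1) c * T y := mul_le_mul_of_nonneg_right (le_max_left _ _) (hpos y).le
  · calc f y ≤ B := hf y
      _ = B / T y₁ * T y₁ := (div_mul_cancel₀ _ (hpos y₁).ne').symm
      _ ≤ c * T y := mul_le_mul (le_max_left _ _) (hA hy.le) (hpos _).le (le_max_right _ _)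
      _ ≤ max (L + 1) c * T y := mul_le_mul_of_nonneg_right (le_max_right _ _) (hpos y).le

end TailFunction

theorem setOf_lt_add_subset {Ω : Type*} (S Y : Ω → ℝ) (x t : ℝ) :
    {ω | x < S ω + Y ω} ⊆ {ω | x - t < S ω} ∪ {ω | x - t < Y ω} ∪
      ⋃ k ∈ Finset.range (⌊x - 2 * t⌋₊ + 1),
        {ω | t + k - 1 < S ω} ∩ {ω | x - t - k - 1 < Y ω} := by
  intro ω hω
  simp only [mem_ofPred_eq] at hω
  by_cases h₁ : x - t < S ω
  · exact Or.inl (Or.inl h₁)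
  by_cases h₂ : x - t < Y ω
  · exact Or.inl (Or.inr h₂)
  rw [not_lt] at h₁ h₂
  have hk := Nat.floor_le (show 0 ≤ S ω - t by linarith)
  have hk' := Nat.lt_floor_add_one (S ω - t)
  refine Or.inr (mem_iUnion₂.2 ⟨⌊S ω - t⌋₊, Finset.mem_range.2
    (Nat.lt_succ_of_le (Nat.floor_le_floor (by linarith))), ?_, ?_⟩) <;>
    simp only [mem_ofPred_eq] <;> linarith

section Probability

variable {Ω : Type*} [MeasurableSpace Ω] {P : Measure Ω}

noncomputable def tailFun (P : Measure Ω) (Y : Ω → ℝ) (x : ℝ) : ℝ := P.real {ω | x < Y ω}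

theorem antitone_tailFun [IsFiniteMeasure P] (Y : Ω → ℝ) : Antitone (tailFun P Y) :=
  fun _ _ hxy => measureReal_mono fun _ hω => lt_of_le_of_lt hxy hω

theorem tailFun_mono [IsFiniteMeasure P] {Y Z : Ω → ℝ} (h : ∀ ω, Y ω ≤ Z ω) (x : ℝ) :
    tailFun P Y x ≤ tailFun P Z x :=
  measureReal_mono fun ω hω => lt_of_lt_of_le hω (h ω)

theorem tailFun_le_one [IsProbabilityMeasure P] (Y : Ω → ℝ) (x : ℝ) : tailFun P Y x ≤ 1 :=
  measureReal_le_one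

theorem tailFun_const_mul {a : ℝ} (ha : 0 < a) (Z : Ω → ℝ) (x : ℝ) :
    tailFun P (fun ω => a * Z ω) x = tailFun P Z (a⁻¹ * x) := by
  simp only [tailFun, inv_mul_lt_iff₀ ha]

theorem ProbabilityTheory.IdentDistrib.tailFun_eq {Y Z : Ω → ℝ} (h : IdentDistrib Y Z P P) :
    tailFun P Y = tailFun P Z :=
  funext fun _ => congrArg ENNReal.toReal (h.measure_mem_eq measurableSet_Ioi)

theorem tendsto_tailFun_atTop [IsFiniteMeasure P] {Y : Ω → ℝ} (hY : Measurable Y) :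
    Tendsto (tailFun P Y) atTop (𝓝 0) := by
  have h := tendsto_measure_iInter_atTop (μ := P) (s := fun x : ℝ => {ω | x < Y ω})
    (fun _ => (measurableSet_lt measurable_const hY).nullMeasurableSet)
    (fun _ _ hxy _ hω => lt_of_le_of_lt hxy hω) ⟨0, measure_ne_top _ _⟩
  have hempty : ⋂ x : ℝ, {ω | x < Y ω} = ∅ :=
    eq_empty_of_forall_notMem fun ω hω => lt_irrefl (Y ω) (mem_iInter.1 hω (Y ω))
  rw [hempty, measure_empty] at h
  exact (ENNReal.tendsto_toReal ENNReal.zero_ne_top).comp h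

theorem tailFun_add_sub_inter_le [IsFiniteMeasure P] {S Y : Ω → ℝ} (hY : Measurable Y)
    (hS₀ : ∀ ω, 0 ≤ S ω) (hY₀ : ∀ ω, 0 ≤ Y ω) (x : ℝ) :
    tailFun P S x + tailFun P Y x - P.real ({ω | x < S ω} ∩ {ω | x < Y ω}) ≤
      tailFun P (S + Y) x := by
  have hU : {ω | x < S ω} ∪ {ω | x < Y ω} ⊆ {ω | x < (S + Y) ω} := by
    rintro ω (h | h) <;> simp only [mem_ofPred_eq, Pi.add_apply] at h ⊢ <;>
      linarith [hS₀ ω, hY₀ ω]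
  have h := measureReal_union_add_inter (μ := P) (s := {ω | x < S ω})
    (measurableSet_lt measurable_const hY)
  simp only [tailFun]
  linarith [measureReal_mono (μ := P) hU]

theorem tailFun_add_le_sum [IsFiniteMeasure P] (S Y : Ω → ℝ) (x t : ℝ) :
    tailFun P (S + Y) x ≤ tailFun P S (x - t) + tailFun P Y (x - t) +
      ∑ k ∈ Finset.range (⌊x - 2 * t⌋₊ + 1),
        P.real ({ω | t + k - 1 < S ω} ∩ {ω | x - t - k - 1 < Y ω}) :=
  (measureReal_mono (setOf_lt_add_subset S Y x t)).trans <| (measureReal_union_le _ _).trans <|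
    add_le_add (measureReal_union_le _ _) (measureReal_biUnion_finset_le _ _)

theorem tailFun_add_le_integral_conv [IsFiniteMeasure P] {S Y : Ω → ℝ} {g C x₀ t x : ℝ}
    (hg : 0 ≤ g) (hC : 0 ≤ C)
    (hdep : ∀ x ≥ x₀, ∀ y ≥ x₀,
      P.real ({ω | x < S ω} ∩ {ω | y < Y ω}) ≤ g * tailFun P S x * tailFun P Y y)
    (hdom : ∀ y, tailFun P S y ≤ C * tailFun P Y y) (ht : x₀ + 1 ≤ t) (hx : 2 * t ≤ x) :
    tailFun P (S + Y) x ≤ tailFun P S (x - t) + tailFun P Y (x - t) +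
      g * C * ∫ y in (t - 2)..(x - 3 - (t - 2)), tailFun P Y (x - 3 - y) * tailFun P Y y := by
  set T := tailFun P Y
  have hT : ∀ y, 0 ≤ T y := fun _ => measureReal_nonneg
  refine (tailFun_add_le_sum S Y x t).trans (add_le_add le_rfl ?_)
  calc ∑ k ∈ Finset.range (⌊x - 2 * t⌋₊ + 1),
        P.real ({ω | t + k - 1 < S ω} ∩ {ω | x - t - k - 1 < Y ω})
      ≤ ∑ k ∈ Finset.range (⌊x - 2 * t⌋₊ + 1), g * C * (T (t + k - 1) * T (x - t - k - 1)) := by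
        refine Finset.sum_le_sum fun k hk => ?_
        have hkx : (k : ℝ) ≤ x - 2 * t := (Nat.cast_le.2 (Nat.lt_succ_iff.1
          (Finset.mem_range.1 hk))).trans (Nat.floor_le (by linarith))
        calc _ ≤ g * tailFun P S (t + k - 1) * T (x - t - k - 1) :=
              hdep _ (by linarith [Nat.cast_nonneg (α := ℝ) k]) _ (by linarith)
          _ ≤ g * (C * T (t + k - 1)) * T (x - t - k - 1) := by
              gcongr
              · exact hT _
              · exact hdom _
          _ = g * C * (T (t + k - 1) * T (x - t - k - 1)) := by ring
    _ = g * C * ∑ k ∈ Finset.range (⌊x - 2 * t⌋₊ + 1), T (t + k - 1) * T (x - t - k - 1) :=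
        (Finset.mul_sum _ _ _).symm
    _ ≤ _ := mul_le_mul_of_nonneg_left
        (sum_mul_le_integral_conv (antitone_tailFun Y) hT (by linarith)) (mul_nonneg hg hC)

theorem tendsto_tailFun_add_div [IsProbabilityMeasure P] {S Y : Ω → ℝ} (hY : Measurable Y)
    (hS₀ : ∀ ω, 0 ≤ S ω) (hY₀ : ∀ ω, 0 ≤ Y ω) (hT : StrongSubexpFun (tailFun P Y))
    {g x₀ L : ℝ} (hg : 0 ≤ g)
    (hdep : ∀ x ≥ x₀, ∀ y ≥ x₀,
      P.real ({ω | x < S ω} ∩ {ω | y < Y ω}) ≤ g * tailFun P S x * tailFun P Y y)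
    (hL : Tendsto (fun x => tailFun P S x / tailFun P Y x) atTop (𝓝 L)) :
    Tendsto (fun x => tailFun P (S + Y) x / tailFun P Y x) atTop (𝓝 (L + 1)) := by
  set T := tailFun P Y
  have hA : Antitone T := antitone_tailFun Y
  have hpos := hT.1
  have hlt := hT.longTailedFun hA
  obtain ⟨C, hC, hdom⟩ := exists_le_mul_of_tendsto_div (tailFun_le_one S) hA hpos hL
  have hS_lim : Tendsto (tailFun P S) atTop (𝓝 0) := by
    simpa using (hL.mul (tendsto_tailFun_atTop hY)).congr fun x =>
      div_mul_cancel₀ _ (hpos x).ne'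
  refine tendsto_of_eventually_squeeze (p := atTop)
    (l := fun _ x => tailFun P S x / T x + 1 - g * tailFun P S x)
    (u := fun t x => (tailFun P S (x - t) + T (x - t) +
      g * C * ∫ y in (t - 2)..(x - 3 - (t - 2)), T (x - 3 - y) * T y) / T x)
    (a := fun _ => L + 1)
    (b := fun t => L + 1 + g * C * (2 * tailMean T - 2 * ∫ y in (0 : ℝ)..(t - 2), T y))
    (Eventually.of_forall fun _ => by simpa using (hL.add_const 1).sub (hS_lim.const_mul g))
    ?_ tendsto_const_nhds ?_ ?_ ?_
  · filter_upwards [eventually_gt_atTop 2] with t ht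
    have hmid := hT.tendsto_integral_conv_mid_div hA (sub_pos.2 ht)
    simp only [add_div, mul_div_assoc]
    exact ((hlt.tendsto_comp_sub_div (by linarith) hL).add (hlt.2 t (by linarith))).add
      ((hlt.tendsto_comp_sub_div three_pos hmid).const_mul (g * C))
  · simpa using tendsto_const_nhds.add (((((tendsto_integral_tailMean hT.2.1).comp
      (tendsto_sub_const_atTop 2)).const_mul 2).const_sub (2 * tailMean T)).const_mul (g * C))
  · refine Eventually.of_forall fun _ => ?_
    filter_upwards [eventually_ge_atTop x₀] with x hx
    have hdiv : (tailFun P S x / T x + 1 - g * tailFun P S x) * T x =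
        tailFun P S x + T x - g * tailFun P S x * T x := by
      field_simp [(hpos x).ne']
    rw [le_div_iff₀ (hpos x), hdiv]
    linarith [tailFun_add_sub_inter_le (P := P) hY hS₀ hY₀ x, hdep x hx x hx]
  · filter_upwards [eventually_ge_atTop (x₀ + 1)] with t ht
    filter_upwards [eventually_ge_atTop (2 * t)] with x hx
    exact div_le_div_of_nonneg_right (tailFun_add_le_integral_conv hg hC hdep hdom ht hx)
      (hpos x).le

theorem tendsto_tailFun_sum_div [IsProbabilityMeasure P] (X : ℕ → Ω → ℝ)
    (hmeas : ∀ j, Measurable (X j)) (hpos : ∀ j ω, 0 ≤ X j ω) {d : ℕ}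
    (hident : ∀ j < d, IdentDistrib (X j) (X 0) P P) (hG : StrongSubexpFun (tailFun P (X 0)))
    {g : ℕ → ℝ} (hg : ∀ n, 0 ≤ g n) {x₀ : ℝ}
    (hLWQD : ∀ n, 2 ≤ n → n ≤ d → ∀ x ≥ x₀, ∀ y ≥ x₀,
      P.real ({ω | x < ∑ j ∈ Finset.range (n - 1), X j ω} ∩ {ω | y < X (n - 1) ω}) ≤
        g (n - 1) * tailFun P (fun ω => ∑ j ∈ Finset.range (n - 1), X j ω) x *
          tailFun P (X (n - 1)) y)
    {n : ℕ} (hn : 1 ≤ n) (hnd : n ≤ d) :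
    Tendsto (fun x => tailFun P (fun ω => ∑ j ∈ Finset.range n, X j ω) x / tailFun P (X 0) x)
      atTop (𝓝 n) := by
  induction n, hn using Nat.le_induction with
  | base =>
    simpa using tendsto_const_nhds.congr fun x => (div_self (hG.1 x).ne').symm
  | succ m hm ih =>
    have hXm := (hident m (by omega)).tailFun_eq
    have hsum : (fun ω => ∑ j ∈ Finset.range (m + 1), X j ω) =
        (fun ω => ∑ j ∈ Finset.range m, X j ω) + X m := by
      ext ω
      simp [Finset.sum_range_succ]
    rw [hsum, Nat.cast_succ, ← hXm]
    rw [← hXm] at hG ih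
    exact tendsto_tailFun_add_div (hmeas m) (fun ω => Finset.sum_nonneg fun j _ => hpos j ω)
      (hpos m) hG (hg m) (by simpa using hLWQD (m + 1) (by omega) hnd) (ih (by omega))

end Probability

theorem statement15_general (d : ℕ) (hd : 0 < d)
    {Ω : Type*} [MeasurableSpace Ω] (P : Measure Ω) [IsProbabilityMeasure P]
    (X : ℕ → Ω → ℝ) (hmeas : ∀ j, Measurable (X j))
    (hpos : ∀ j ω, 0 ≤ X j ω)
    (hident : ∀ j < d, IdentDistrib (X j) (X 0) P P)
    (hG : StrongSubexpFun (fun x => (P {ω | x < X 0 ω}).toReal))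
    (g : ℕ → ℝ) (hg : ∀ n, 0 < g n) (x₀ : ℝ)
    (hLWQD : ∀ n, 2 ≤ n → n ≤ d → ∀ x ≥ x₀, ∀ y ≥ x₀,
      (P ({ω | x < ∑ j ∈ Finset.range (n - 1), X j ω} ∩ {ω | y < X (n - 1) ω})).toReal ≤
        g (n - 1) * (P {ω | x < ∑ j ∈ Finset.range (n - 1), X j ω}).toReal *
          (P {ω | y < X (n - 1) ω}).toReal) :
    ∀ c > (0 : ℝ),
      Tendsto (fun x =>
          (P {ω | x < (c / d) * ∑ j ∈ Finset.range d, X j ω}).toReal /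
            ((d : ℝ) * (P {ω | x < (c / d) * X 0 ω}).toReal)) atTop (nhds 1) ∧
        StrongSubexpFun (fun x => (P {ω | x < (c / d) * ∑ j ∈ Finset.range d, X j ω}).toReal) := by
  intro c hc
  change StrongSubexpFun (tailFun P (X 0)) at hG
  have hdpos : (0 : ℝ) < d := Nat.cast_pos.2 hd
  have hα : 0 < (c / d)⁻¹ := inv_pos.2 (div_pos hc hdpos)
  have hscale : ∀ (Z : Ω → ℝ) x, (P {ω | x < c / d * Z ω}).toReal = tailFun P Z ((c / d)⁻¹ * x) :=
    tailFun_const_mul (div_pos hc hdpos)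
  have hsum := (tendsto_tailFun_sum_div X hmeas hpos hident hG (fun n => (hg n).le) hLWQD hd
    le_rfl).div_const (d : ℝ)
  simp only [div_self hdpos.ne', div_div, mul_comm _ (d : ℝ)] at hsum
  have hscaled := hsum.comp (tendsto_id.const_mul_atTop hα)
  simp only [hscale]
  refine ⟨hscaled, StrongSubexpFun.of_tendsto_div
    (fun x y hxy => mul_le_mul_of_nonneg_left (antitone_tailFun _ (by gcongr)) hdpos.le)
    (hG.const_mul_comp_mul hdpos hα) (fun x y hxy => antitone_tailFun _ (by gcongr))
    (fun x => (hG.1 _).trans_le (tailFun_mono (fun ω => Finset.single_le_sum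
      (fun j _ => hpos j ω) (Finset.mem_range.2 hd)) _)) hscaled⟩

/-- LWQD, identically distributed nonnegative random variables with common distribution
`G ∈ 𝒮*`: for `A₁' = {x : Σᵢ xᵢ/d > c}` the tail `x ↦ P[(c/d)·Σⱼ Xⱼ > x]` of `F_{A₁'}`
satisfies `P[(c/d)Σⱼ Xⱼ > x] ∼ d·Ḡ'(x)` with `G'` the law of `(c/d)X₁`, and
`F ∈ 𝒮*_{A₁'}`. -/
theorem statement15 (d : ℕ) (hd : 0 < d)
    {Ω : Type*} [MeasurableSpace Ω] (P : Measure Ω) [IsProbabilityMeasure P]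
    (X : ℕ → Ω → ℝ) (hmeas : ∀ j, Measurable (X j))
    (hpos : ∀ j ω, 0 ≤ X j ω)
    (hident : ∀ j < d, IdentDistrib (X j) (X 0) P P)
    (hG : StrongSubexpFun (fun x => (P {ω | x < X 0 ω}).toReal))
    (g : ℕ → ℝ) (hg : ∀ n, 0 < g n) (x₀ : ℝ) (hx₀ : 0 < x₀)
    (hLWQD : ∀ n, 2 ≤ n → n ≤ d → ∀ x ≥ x₀, ∀ y ≥ x₀,
      (P ({ω | x < ∑ j ∈ Finset.range (n - 1), X j ω} ∩ {ω | y < X (n - 1) ω})).toReal ≤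
        g (n - 1) * (P {ω | x < ∑ j ∈ Finset.range (n - 1), X j ω}).toReal *
          (P {ω | y < X (n - 1) ω}).toReal) :
    ∀ c > (0 : ℝ),
      Tendsto (fun x =>
          (P {ω | x < (c / d) * ∑ j ∈ Finset.range d, X j ω}).toReal /
            ((d : ℝ) * (P {ω | x < (c / d) * X 0 ω}).toReal)) atTop (nhds 1) ∧
        StrongSubexpFun (fun x => (P {ω | x < (c / d) * ∑ j ∈ Finset.range d, X j ω}).toReal) :=
  statement15_general d hd P X hmeas hpos hident hG g hg x₀ hLWQD
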